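/- Let h be any Lie subalgebra of g = ⟨A⟩ ⊕ 𝓔 ⊕ T𝓔 ⊕ ⋯ ⊕ T^{m−1}𝓔 ⊆ gl(U) containing s = ⟨A⟩ ⊕ ⟨T⟩. Then U is a uniserial h-module if and only if s₁ = s₂ = ⋯ = s_m = 1. -/

import Mathlib

open Polynomial

attribute [local instance 100] LieRing.ofAssociativeRing

/-- The shifted polynomial `p_{i+1}(X) = p₁(X + i)`: we use 0-based indexing for the
paper's `p_i(X) = p₁(X + (i−1))`, `1 ≤ i ≤ m`. -/
noncomputable def pShift {F : Type*} [Field F] (q : Polynomial F) (i : ℕ) : Polynomial F :=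
  q.comp (X + C (i : F))

/-- The `F[X]`-module `U = U₁ ⊕ ⋯ ⊕ U_m`, where `U_{i+1} = F[X]·u_{i+1} ≅
F[X]/(p_{i+1}^{s_{i+1}})` (0-based indexing). -/
def Uspace (F : Type*) [Field F] (q : Polynomial F) (m : ℕ) (s : Fin m → ℕ) : Type _ :=
  (i : Fin m) → Polynomial F ⧸ Ideal.span {(pShift q i) ^ (s i)}

noncomputable instance {F : Type*} [Field F] (q : Polynomial F) (m : ℕ) (s : Fin m → ℕ) :
    AddCommGroup (Uspace F q m s) :=
  inferInstanceAs (AddCommGroup ((i : Fin m) → Polynomial F ⧸ Ideal.span {(pShift q i) ^ (s i)}))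

noncomputable instance {F : Type*} [Field F] (q : Polynomial F) (m : ℕ) (s : Fin m → ℕ) :
    Module F (Uspace F q m s) :=
  inferInstanceAs (Module F ((i : Fin m) → Polynomial F ⧸ Ideal.span {(pShift q i) ^ (s i)}))

/-- The operator `A ∈ End_F(U)`: multiplication by `X`. -/
noncomputable def Aop (F : Type*) [Field F] (q : Polynomial F) (m : ℕ) (s : Fin m → ℕ) :
    Module.End F (Uspace F q m s) :=
  LinearMap.pi fun i =>
    (LinearMap.mulLeft F (Ideal.Quotient.mk (Ideal.span {(pShift q i) ^ (s i)}) X)).comp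
      (LinearMap.proj i)

/-- The operator `E ∈ End_F(U)`: the `F[X]`-linear map with `E u_i = (X + (i−1)) u_i`
(0-based: on the `i`-th component it is multiplication by `X + i`). -/
noncomputable def Eop (F : Type*) [Field F] (q : Polynomial F) (m : ℕ) (s : Fin m → ℕ) :
    Module.End F (Uspace F q m s) :=
  LinearMap.pi fun i =>
    (LinearMap.mulLeft F
        (Ideal.Quotient.mk (Ideal.span {(pShift q i) ^ (s i)}) (X + C (i : F)))).comp
      (LinearMap.proj i)

/-- Componentwise multiplication by the polynomial `g` on `U` (the action `u ↦ g(X)·u`). -/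
noncomputable def polySmul {F : Type*} [Field F] {q : Polynomial F} {m : ℕ} {s : Fin m → ℕ}
    (g : Polynomial F) (u : Uspace F q m s) : Uspace F q m s :=
  fun i => Ideal.Quotient.mk (Ideal.span {(pShift q i) ^ (s i)}) g * u i

/-- The canonical generator `u_{i+1}` of the summand `U_{i+1}` (0-based). -/
noncomputable def uGen (F : Type*) [Field F] (q : Polynomial F) (m : ℕ) (s : Fin m → ℕ)
    (i : Fin m) : Uspace F q m s :=
  Pi.single i 1

/-- The standing assumptions on the data: `p₁ = q` is monic irreducible of degree `d`,
`m > 1`, and `s₁ ≥ s₂ ≥ ⋯ ≥ s_m ≥ 1`. -/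
structure GoodData (F : Type*) [Field F] (q : Polynomial F) (d m : ℕ) (s : Fin m → ℕ) :
    Prop where
  monic : q.Monic
  irr : Irreducible q
  deg : q.natDegree = d
  hm : 1 < m
  dec : ∀ i j : Fin m, i ≤ j → s j ≤ s i
  pos : ∀ i, 1 ≤ s i

/-- `T` is the operator of the paper: the unique `F`-linear endomorphism of `U` with
`T u₁ = 0`, `T u_i = p_{i−1}(X)^{s_{i−1}−s_i} u_{i−1}` for `2 ≤ i ≤ m`, and
`T(g(X+1)·u) = g(X)·(T u)` for all `g ∈ F[X]`, `u ∈ U`. -/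
def IsTmap {F : Type*} [Field F] (q : Polynomial F) (m : ℕ) (s : Fin m → ℕ)
    (T : Module.End F (Uspace F q m s)) : Prop :=
  (∀ h0 : 0 < m, T (uGen F q m s ⟨0, h0⟩) = 0) ∧
  (∀ (i : ℕ) (hi : i + 1 < m),
      T (uGen F q m s ⟨i + 1, hi⟩) =
        polySmul ((pShift q i) ^ (s ⟨i, by omega⟩ - s ⟨i + 1, hi⟩))
          (uGen F q m s ⟨i, by omega⟩)) ∧
  (∀ (g : Polynomial F) (u : Uspace F q m s),
      T (polySmul (g.comp (X + C 1)) u) = polySmul g (T u))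

/-- The linear map `F[X] → End_F(U)`, `g ↦ T^j ∘ g(E)`, whose image is the subspace
`T^j·𝓔` of `End_F(U)`. -/
noncomputable def psiMap {F : Type*} [Field F] (q : Polynomial F) (m : ℕ) (s : Fin m → ℕ)
    (T : Module.End F (Uspace F q m s)) (j : ℕ) :
    Polynomial F →ₗ[F] Module.End F (Uspace F q m s) :=
  (LinearMap.mulLeft F (T ^ j)).comp (Polynomial.aeval (Eop F q m s)).toLinearMap

/-- The projection `U → U_{i+1}` onto the `i`-th summand (0-based). -/
noncomputable def projU (F : Type*) [Field F] (q : Polynomial F) (m : ℕ) (s : Fin m → ℕ)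
    (i : Fin m) : Uspace F q m s →ₗ[F] Polynomial F ⧸ Ideal.span {(pShift q i) ^ (s i)} :=
  LinearMap.proj i

/-- The submodule `U^{(i)} = U₁ ⊕ ⋯ ⊕ U_i` of `U` (0-based: the components `j ≥ i`
vanish). -/
noncomputable def Usub (F : Type*) [Field F] (q : Polynomial F) (m : ℕ) (s : Fin m → ℕ)
    (i : ℕ) : Submodule F (Uspace F q m s) :=
  ⨅ j : Fin m, ⨅ _ : i ≤ (j : ℕ), LinearMap.ker (projU F q m s j)

/-- A subspace `W ⊆ V` is invariant under a set `S` of endomorphisms of `V`. -/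
def InvariantUnder {F V : Type*} [Field F] [AddCommGroup V] [Module F V]
    (S : Set (Module.End F V)) (W : Submodule F V) : Prop :=
  ∀ f ∈ S, ∀ u ∈ W, f u ∈ W

/-- The nilpotency series `0 = U^{(0)} ⊆ U^{(1)} ⊆ ⋯` of `V` relative to a set `N` of
endomorphisms (the action of the nilpotent radical): `U^{(k+1)}/U^{(k)}` is the 0-weight
space of `N` acting on `V/U^{(k)}`, i.e. `U^{(k+1)} = {u | f u ∈ U^{(k)} for all f ∈ N}`. -/
noncomputable def nilpSeries {F V : Type*} [Field F] [AddCommGroup V] [Module F V]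
    (N : Set (Module.End F V)) : ℕ → Submodule F V
  | 0 => ⊥
  | k + 1 => ⨅ f ∈ N, (nilpSeries N k).comap f

/-- `V` has nilpotency length `m` relative to the set `N` of endomorphisms. -/
def HasNilpLength {F V : Type*} [Field F] [AddCommGroup V] [Module F V]
    (N : Set (Module.End F V)) (m : ℕ) : Prop :=
  nilpSeries N m = ⊤ ∧ ∀ k < m, nilpSeries N k ≠ ⊤

/-- `V` is a linked module relative to the acting Lie algebra (realized as the set `S` of
endomorphisms) with nilpotent radical acting through the set `N` of endomorphisms:
`V` is nonzero, `N` acts by nilpotent operators (admissibility), and each nilpotency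
factor `U^{(k+1)}/U^{(k)}` is uniserial over `g/n`, i.e. the invariant submodules lying
between `U^{(k)}` and `U^{(k+1)}` form a chain. -/
def IsLinked {F V : Type*} [Field F] [AddCommGroup V] [Module F V]
    (S N : Set (Module.End F V)) : Prop :=
  (⊥ : Submodule F V) ≠ ⊤ ∧
  (∀ f ∈ N, IsNilpotent f) ∧
  ∀ (k : ℕ) (W₁ W₂ : Submodule F V),
    InvariantUnder S W₁ → InvariantUnder S W₂ →
    nilpSeries N k ≤ W₁ → W₁ ≤ nilpSeries N (k + 1) →
    nilpSeries N k ≤ W₂ → W₂ ≤ nilpSeries N (k + 1) →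
    W₁ ≤ W₂ ∨ W₂ ≤ W₁

/-- The set of endomorphisms of `V` coming from the nilpotent radical
`n = ⁅h, rad(h)⁆` of a Lie subalgebra `h ⊆ gl(V)`. -/
def nilpRadSet {F V : Type*} [Field F] [AddCommGroup V] [Module F V]
    (h : LieSubalgebra F (Module.End F V)) : Set (Module.End F V) :=
  (fun z : h => (z : Module.End F V)) ''
    {z : h | z ∈ ⁅(⊤ : LieIdeal F h), LieAlgebra.radical F h⁆}

/-! `T` kills `U₁` and sends `g·u_{i+1}` to `g(X-1)·p_i^{s_i-s_{i+1}}·u_i`.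

If all `s_i = 1`, every `U_i = F[X]/(p_i)` is a field and `T` maps `U_{i+1}` injectively
into `U_i`. Hence a subspace stable under `A` and `T` that contains a vector whose last
nonzero component lies in `U_k` contains `U_{k-1} ⊕ ⋯ ⊕ U₁` (apply `T` and induct) and then
all of `U₁ ⊕ ⋯ ⊕ U_k` (multiply by a polynomial inverting that component). So the invariant
subspaces are exactly the terms of the chain `U^{(0)} ⊆ ⋯ ⊆ U^{(m)}`.

If some `s_i ≥ 2`, then `s₁ ≥ 2`, and `U₁` and the socle `{u | p_i u_i = 0 for all i}` are
stable under `A`, `E` and `T`, hence under `h`; but `u₁` is not in the socle and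
`p₂^{s₂-1} u₂` is not in `U₁`. -/

section Shift

variable {F : Type*} [Field F] {q : Polynomial F}

lemma pShift_irreducible (hq : Irreducible q) (i : ℕ) : Irreducible (pShift q i) := by
  convert hq.map (algEquivAevalXAddC (i : F)) using 1
  simp [pShift, comp_eq_aeval]

lemma pShift_succ_comp_X_sub_C_one (i : ℕ) : (pShift q (i + 1)).comp (X - C 1) = pShift q i := by
  simp only [pShift, comp_assoc, add_comp, X_comp, C_comp]
  congr 1
  push_cast
  rw [C_add]
  ring

lemma pShift_comp_X_add_C_one (i : ℕ) : (pShift q i).comp (X + C 1) = pShift q (i + 1) := by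
  simp only [pShift, comp_assoc, add_comp, X_comp, C_comp]
  congr 1
  push_cast
  rw [C_add]
  ring

end Shift

section Uspace

variable {F : Type*} [Field F] {q : Polynomial F} {m : ℕ} {s : Fin m → ℕ}

lemma mem_Usub {n : ℕ} {u : Uspace F q m s} :
    u ∈ Usub F q m s n ↔ ∀ j : Fin m, n ≤ j → u j = 0 := by
  simp only [Usub, projU, Submodule.mem_iInf]
  rfl

lemma Usub_zero : Usub F q m s 0 = ⊥ :=
  eq_bot_iff.mpr fun _ hu => funext fun j => mem_Usub.mp hu j (Nat.zero_le _)

lemma Usub_mono : Monotone (Usub F q m s) :=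
  fun _ _ hnk _ hu => mem_Usub.mpr fun j hj => mem_Usub.mp hu j (hnk.trans hj)

lemma polySmul_apply (g : Polynomial F) (u : Uspace F q m s) (i : Fin m) :
    polySmul g u i = Ideal.Quotient.mk _ g * u i := rfl

lemma polySmul_mul (f g : Polynomial F) (u : Uspace F q m s) :
    polySmul (f * g) u = polySmul f (polySmul g u) := by
  funext i
  simp only [polySmul_apply, map_mul, mul_assoc]

lemma polySmul_uGen (g : Polynomial F) (i : Fin m) :
    polySmul g (uGen F q m s i) = Pi.single i (Ideal.Quotient.mk _ g) := by
  funext j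
  rw [polySmul_apply]
  rcases eq_or_ne j i with rfl | hj
  · simp [uGen]
  · simp [uGen, hj]

lemma polySmul_C (a : F) (u : Uspace F q m s) : polySmul (C a) u = a • u := by
  funext i
  obtain ⟨g, hg⟩ := Ideal.Quotient.mk_surjective (u i)
  change _ = a • u i
  rw [polySmul_apply, ← hg, ← map_mul, ← smul_eq_C_mul]
  rfl

lemma polySmul_add (f g : Polynomial F) (u : Uspace F q m s) :
    polySmul (f + g) u = polySmul f u + polySmul g u := by
  funext i
  simp only [polySmul_apply, map_add, add_mul]
  rfl

lemma polySmul_zero (g : Polynomial F) : polySmul g (0 : Uspace F q m s) = 0 :=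
  funext fun _ => mul_zero _

/- `Uspace` is not reducibly a Π-type, so the pointwise lemmas about Π-types do not fire under
`rw` and are restated here. -/
lemma Uspace.sub_apply (u v : Uspace F q m s) (i : Fin m) : (u - v) i = u i - v i := rfl

lemma Uspace.sum_apply {ι : Type*} (S : Finset ι) (f : ι → Uspace F q m s) (i : Fin m) :
    (∑ k ∈ S, f k) i = ∑ k ∈ S, f k i :=
  Finset.sum_apply i S f

lemma Uspace.sum_single (u : Uspace F q m s) :
    @Finset.sum (Fin m) (Uspace F q m s) _ Finset.univ (fun i => Pi.single i (u i)) = u :=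
  Finset.univ_sum_single u

lemma polySmul_mem {W : Submodule F (Uspace F q m s)} (hW : Set.MapsTo (Aop F q m s) W W)
    (g : Polynomial F) {u : Uspace F q m s} (hu : u ∈ W) : polySmul g u ∈ W := by
  induction g using Polynomial.induction_on generalizing u with
  | C a =>
    rw [polySmul_C]
    exact W.smul_mem a hu
  | add f g hf hg =>
    rw [polySmul_add]
    exact W.add_mem (hf hu) (hg hu)
  | monomial n a ih =>
    rw [pow_succ, ← mul_assoc, polySmul_mul]
    exact ih (hW hu)

noncomputable def Usocle (F : Type*) [Field F] (q : Polynomial F) (m : ℕ) (s : Fin m → ℕ) :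
    Submodule F (Uspace F q m s) :=
  ⨅ i : Fin m, LinearMap.ker
    ((LinearMap.mulLeft F (Ideal.Quotient.mk _ (pShift q i))).comp (projU F q m s i))

lemma mem_Usocle {u : Uspace F q m s} :
    u ∈ Usocle F q m s ↔ ∀ i : Fin m, Ideal.Quotient.mk _ (pShift q i) * u i = 0 := by
  simp only [Usocle, Submodule.mem_iInf]
  rfl

lemma mapsTo_Usub_of_apply_eq_mul {f : Module.End F (Uspace F q m s)}
    (c : (i : Fin m) → Polynomial F ⧸ Ideal.span {pShift q i ^ s i})
    (hf : ∀ u i, f u i = c i * u i) (n : ℕ) : Set.MapsTo f (Usub F q m s n) (Usub F q m s n) :=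
  fun u hu => mem_Usub.mpr fun j hj => by rw [hf, mem_Usub.mp hu j hj, mul_zero]

lemma mapsTo_Usocle_of_apply_eq_mul {f : Module.End F (Uspace F q m s)}
    (c : (i : Fin m) → Polynomial F ⧸ Ideal.span {pShift q i ^ s i})
    (hf : ∀ u i, f u i = c i * u i) : Set.MapsTo f (Usocle F q m s) (Usocle F q m s) :=
  fun u hu => mem_Usocle.mpr fun j => by rw [hf, mul_left_comm, mem_Usocle.mp hu j, mul_zero]

lemma invariantUnder_of_mapsTo {T : Module.End F (Uspace F q m s)}
    {h : LieSubalgebra F (Module.End F (Uspace F q m s))}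
    (hsub : (h : Set (Module.End F (Uspace F q m s))) ⊆
      ↑((F ∙ Aop F q m s) ⊔ (⨆ j : Fin m, LinearMap.range (psiMap q m s T j))))
    {W : Submodule F (Uspace F q m s)} (hA : Set.MapsTo (Aop F q m s) W W)
    (hE : Set.MapsTo (Eop F q m s) W W) (hT : Set.MapsTo T W W) :
    InvariantUnder (h : Set (Module.End F (Uspace F q m s))) W := by
  have hle : (F ∙ Aop F q m s) ⊔ (⨆ j : Fin m, LinearMap.range (psiMap q m s T j)) ≤
      W.compatibleMaps W := by
    refine sup_le ((Submodule.span_singleton_le_iff_mem _ _).mpr hA) (iSup_le fun j => ?_)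
    rintro _ ⟨g, rfl⟩ u hu
    change (T ^ (j : ℕ)) (aeval (Eop F q m s) g u) ∈ W
    rw [Module.End.pow_apply]
    exact hT.iterate j (aeval_apply_smul_mem_of_le_comap hu g _ hE)
  exact fun f hf u hu => hle (hsub hf) hu

end Uspace

namespace IsTmap

variable {F : Type*} [Field F] {q : Polynomial F} {m : ℕ} {s : Fin m → ℕ}
  {T : Module.End F (Uspace F q m s)}

lemma map_polySmul (hT : IsTmap q m s T) (g : Polynomial F) (u : Uspace F q m s) :
    T (polySmul g u) = polySmul (g.comp (X - C 1)) (T u) := by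
  have hcomp : (g.comp (X - C 1)).comp (X + C 1) = g := by
    rw [comp_assoc, sub_comp, X_comp, C_comp, add_sub_cancel_right, comp_X]
  rw [← hT.2.2, hcomp]

lemma apply_polySmul_uGen_zero (hT : IsTmap q m s T) (h0 : 0 < m) (g : Polynomial F) :
    T (polySmul g (uGen F q m s ⟨0, h0⟩)) = 0 := by
  rw [hT.map_polySmul, hT.1 h0, polySmul_zero]

lemma apply_polySmul_uGen_succ (hT : IsTmap q m s T) {i : ℕ} (hi : i + 1 < m)
    (g : Polynomial F) :
    T (polySmul g (uGen F q m s ⟨i + 1, hi⟩)) =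
      polySmul (g.comp (X - C 1) * pShift q i ^ (s ⟨i, by omega⟩ - s ⟨i + 1, hi⟩))
        (uGen F q m s ⟨i, by omega⟩) := by
  rw [hT.map_polySmul, hT.2.1 i hi, ← polySmul_mul]

lemma apply_single_apply_of_ne (hT : IsTmap q m s T) {i j : Fin m} (hij : (i : ℕ) ≠ j + 1)
    (x : Polynomial F ⧸ Ideal.span {pShift q i ^ s i}) : T (Pi.single i x) j = 0 := by
  obtain ⟨g, rfl⟩ := Ideal.Quotient.mk_surjective x
  rw [← polySmul_uGen]
  obtain ⟨_ | i, hi⟩ := i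
  · rw [hT.apply_polySmul_uGen_zero]
    rfl
  · rw [hT.apply_polySmul_uGen_succ hi, polySmul_uGen]
    exact Pi.single_eq_of_ne (fun h => hij (by simp [h])) _

lemma apply_apply_eq_zero (hT : IsTmap q m s T) {u : Uspace F q m s} {j : Fin m}
    (hu : ∀ i : Fin m, (i : ℕ) = j + 1 → u i = 0) : T u j = 0 := by
  have hsum : T u = ∑ i, T (Pi.single i (u i)) :=
    (congrArg T (Uspace.sum_single u)).symm.trans (map_sum T _ _)
  rw [hsum, Uspace.sum_apply]
  refine Finset.sum_eq_zero fun i _ => ?_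
  by_cases hij : (i : ℕ) = j + 1
  · have hzero : (Pi.single i (u i) : Uspace F q m s) = 0 := by rw [hu i hij, Pi.single_zero]
    rw [hzero]
    exact congrArg (fun v : Uspace F q m s => v j) (map_zero T)
  · exact hT.apply_single_apply_of_ne hij _

lemma apply_apply (hT : IsTmap q m s T) (u : Uspace F q m s) {j : ℕ} (hj : j + 1 < m)
    {g : Polynomial F} (hg : Ideal.Quotient.mk _ g = u ⟨j + 1, hj⟩) :
    T u ⟨j, by omega⟩ = Ideal.Quotient.mk _
      (g.comp (X - C 1) * pShift q j ^ (s ⟨j, by omega⟩ - s ⟨j + 1, hj⟩)) := by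
  have hrest : T (u - polySmul g (uGen F q m s ⟨j + 1, hj⟩)) ⟨j, by omega⟩ = 0 := by
    refine hT.apply_apply_eq_zero fun i hi => ?_
    obtain rfl : i = ⟨j + 1, hj⟩ := Fin.ext hi
    rw [Uspace.sub_apply, polySmul_uGen, Pi.single_eq_same, hg, sub_self]
  rwa [map_sub, Uspace.sub_apply, hT.apply_polySmul_uGen_succ, polySmul_uGen, Pi.single_eq_same,
    sub_eq_zero] at hrest

lemma mapsTo_Usub_succ (hT : IsTmap q m s T) (n : ℕ) :
    Set.MapsTo T (Usub F q m s (n + 1)) (Usub F q m s n) :=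
  fun _ hu => mem_Usub.mpr fun j hj =>
    hT.apply_apply_eq_zero fun i hi => mem_Usub.mp hu i (by omega)

lemma mapsTo_Usocle (hT : IsTmap q m s T) : Set.MapsTo T (Usocle F q m s) (Usocle F q m s) := by
  intro u hu
  rw [SetLike.mem_coe, mem_Usocle] at hu ⊢
  rintro ⟨j, hjm⟩
  by_cases hj : j + 1 < m
  · obtain ⟨g, hg⟩ := Ideal.Quotient.mk_surjective (u ⟨j + 1, hj⟩)
    have hdvd := hu ⟨j + 1, hj⟩
    rw [← hg, ← map_mul, Ideal.Quotient.eq_zero_iff_dvd] at hdvd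
    obtain ⟨c, hc⟩ := hdvd
    have hc' := congrArg (fun f => f.comp (X - C 1)) hc
    simp only [mul_comp, pow_comp, pShift_succ_comp_X_sub_C_one] at hc'
    rw [hT.apply_apply u hj hg, ← map_mul, Ideal.Quotient.eq_zero_iff_dvd]
    calc pShift q j ^ s ⟨j, hjm⟩
        ∣ pShift q j ^ s ⟨j + 1, hj⟩ * pShift q j ^ (s ⟨j, hjm⟩ - s ⟨j + 1, hj⟩) := by
          rw [← pow_add]
          exact pow_dvd_pow _ (by omega)
      _ ∣ pShift q j * (g.comp (X - C 1) * pShift q j ^ (s ⟨j, hjm⟩ - s ⟨j + 1, hj⟩)) :=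
          ⟨c.comp (X - C 1), by rw [← mul_assoc, hc']; ring⟩
  · rw [hT.apply_apply_eq_zero fun i hi => absurd i.isLt (by rw [hi]; omega), mul_zero]

lemma apply_ne_zero (hT : IsTmap q m s T) {k : ℕ} (hk : k + 1 < m)
    (hs : s ⟨k, by omega⟩ = s ⟨k + 1, hk⟩) {u : Uspace F q m s}
    (hu : u ⟨k + 1, hk⟩ ≠ 0) :
    T u ⟨k, by omega⟩ ≠ 0 := by
  obtain ⟨g, hg⟩ := Ideal.Quotient.mk_surjective (u ⟨k + 1, hk⟩)
  rw [hT.apply_apply u hk hg, Ne, Ideal.Quotient.eq_zero_iff_dvd, hs, Nat.sub_self, pow_zero,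
    mul_one, dvd_comp_X_sub_C_iff, pow_comp, pShift_comp_X_add_C_one]
  rwa [← hg, Ne, Ideal.Quotient.eq_zero_iff_dvd] at hu

end IsTmap

section Backward

variable {F : Type*} [Field F] {q : Polynomial F} {m : ℕ} {s : Fin m → ℕ}

lemma isUnit_of_ne_zero_of_exponent_eq_one (hq : Irreducible q) {i : Fin m} (hs : s i = 1)
    {x : Polynomial F ⧸ Ideal.span {pShift q i ^ s i}} (hx : x ≠ 0) : IsUnit x := by
  have : (Ideal.span {pShift q i ^ s i}).IsMaximal := by
    rw [hs, pow_one]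
    exact PrincipalIdealRing.isMaximal_of_irreducible (pShift_irreducible hq i)
  let := Ideal.Quotient.field (Ideal.span {pShift q i ^ s i})
  exact isUnit_iff_ne_zero.mpr hx

lemma Usub_succ_le_of_mem (hq : Irreducible q) {k : Fin m} (hs : s k = 1)
    {W : Submodule F (Uspace F q m s)} (hWA : Set.MapsTo (Aop F q m s) W W)
    (hk : Usub F q m s k ≤ W) {u : Uspace F q m s} (hu : u ∈ W)
    (huk : u ∈ Usub F q m s (k + 1)) (hu0 : u k ≠ 0) : Usub F q m s (k + 1) ≤ W := by
  intro v hv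
  obtain ⟨b, hb⟩ := (isUnit_of_ne_zero_of_exponent_eq_one hq hs hu0).exists_left_inv
  obtain ⟨g, hg⟩ := Ideal.Quotient.mk_surjective (v k * b)
  have hrest : v - polySmul g u ∈ Usub F q m s k := by
    refine mem_Usub.mpr fun j hj => ?_
    rw [Uspace.sub_apply, polySmul_apply]
    rcases hj.eq_or_lt with hjk | hjk
    · obtain rfl : j = k := Fin.ext hjk.symm
      rw [hg, mul_assoc, hb, mul_one, sub_self]
    · rw [mem_Usub.mp hv j hjk, mem_Usub.mp huk j hjk, mul_zero, sub_zero]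
  simpa using W.add_mem (hk hrest) (polySmul_mem hWA g hu)

lemma Usub_succ_le_of_invariant (hq : Irreducible q) (hs1 : ∀ i, s i = 1)
    {T : Module.End F (Uspace F q m s)} (hT : IsTmap q m s T)
    {W : Submodule F (Uspace F q m s)} (hWA : Set.MapsTo (Aop F q m s) W W)
    (hWT : Set.MapsTo T W W) (k : ℕ) (hk : k < m) {u : Uspace F q m s} (hu : u ∈ W)
    (huk : u ∈ Usub F q m s (k + 1)) (hu0 : u ⟨k, hk⟩ ≠ 0) :
    Usub F q m s (k + 1) ≤ W := by
  induction k generalizing u with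
  | zero =>
    exact Usub_succ_le_of_mem (k := ⟨0, hk⟩) hq (hs1 _) hWA (Usub_zero.trans_le bot_le)
      hu huk hu0
  | succ k ih =>
    have hTu : Usub F q m s (k + 1) ≤ W := ih (by omega) (hWT hu) (hT.mapsTo_Usub_succ _ huk)
      (hT.apply_ne_zero hk ((hs1 _).trans (hs1 _).symm) hu0)
    exact Usub_succ_le_of_mem (k := ⟨k + 1, hk⟩) hq (hs1 _) hWA hTu hu huk hu0

lemma exists_eq_Usub_of_invariant (hq : Irreducible q) (hs1 : ∀ i, s i = 1)
    {T : Module.End F (Uspace F q m s)} (hT : IsTmap q m s T)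
    {W : Submodule F (Uspace F q m s)} (hWA : Set.MapsTo (Aop F q m s) W W)
    (hWT : Set.MapsTo T W W) : ∃ n, W = Usub F q m s n := by
  classical
  have hex : ∃ n, W ≤ Usub F q m s n :=
    ⟨m, fun _ _ => mem_Usub.mpr fun j hj => absurd j.isLt (by omega)⟩
  refine ⟨Nat.find hex, le_antisymm (Nat.find_spec hex) ?_⟩
  cases hn : Nat.find hex with
  | zero => exact Usub_zero.trans_le bot_le
  | succ k =>
    obtain ⟨u, huW, huk⟩ := SetLike.not_le_iff_exists.mp (Nat.find_min hex (m := k) (by omega))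
    have hu : u ∈ Usub F q m s (k + 1) := hn ▸ Nat.find_spec hex huW
    obtain ⟨j, hkj, hj⟩ : ∃ j : Fin m, k ≤ j ∧ u j ≠ 0 := by
      simpa [mem_Usub] using huk
    obtain rfl : (j : ℕ) = k := by
      by_contra hne
      exact hj (mem_Usub.mp hu j (by omega))
    exact Usub_succ_le_of_invariant hq hs1 hT hWA hWT j j.isLt huW hu hj

end Backward

section Forward

variable {F : Type*} [Field F] {q : Polynomial F} {m : ℕ} {s : Fin m → ℕ}

lemma mk_pShift_pow_ne_zero (hq : Irreducible q) {i : Fin m} {k : ℕ} (hk : k < s i) :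
    Ideal.Quotient.mk (Ideal.span {pShift q i ^ s i}) (pShift q i ^ k) ≠ 0 := by
  have hp := pShift_irreducible hq i
  rw [Ne, Ideal.Quotient.eq_zero_iff_dvd, pow_dvd_pow_iff hp.ne_zero hp.not_isUnit]
  omega

lemma not_Usub_one_le_Usocle (hq : Irreducible q) (h0 : 0 < m) (hs : 2 ≤ s ⟨0, h0⟩) :
    ¬ Usub F q m s 1 ≤ Usocle F q m s := by
  intro hle
  have hu : uGen F q m s ⟨0, h0⟩ ∈ Usub F q m s 1 :=
    mem_Usub.mpr fun j hj => Pi.single_eq_of_ne (fun h => by simp [h] at hj) _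
  have hsoc := mem_Usocle.mp (hle hu) ⟨0, h0⟩
  have hne := mk_pShift_pow_ne_zero hq (s := s) (i := ⟨0, h0⟩) (k := 1) (by omega)
  rw [uGen, Pi.single_eq_same, mul_one] at hsoc
  rw [pow_one] at hne
  exact hne hsoc

lemma not_Usocle_le_Usub_one (hq : Irreducible q) (hm : 1 < m) (hs : 1 ≤ s ⟨1, hm⟩) :
    ¬ Usocle F q m s ≤ Usub F q m s 1 := by
  intro hle
  have hv : polySmul (pShift q 1 ^ (s ⟨1, hm⟩ - 1)) (uGen F q m s ⟨1, hm⟩) ∈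
      Usocle F q m s := by
    refine mem_Usocle.mpr fun i => ?_
    rw [polySmul_apply]
    rcases eq_or_ne i ⟨1, hm⟩ with rfl | hi
    · rw [uGen, Pi.single_eq_same, mul_one, ← map_mul, ← pow_succ', Nat.sub_add_cancel hs,
        Ideal.Quotient.eq_zero_iff_dvd]
    · rw [uGen, Pi.single_eq_of_ne hi, mul_zero, mul_zero]
  have hv1 := mem_Usub.mp (hle hv) ⟨1, hm⟩ le_rfl
  rw [polySmul_apply, uGen, Pi.single_eq_same, mul_one] at hv1
  exact mk_pShift_pow_ne_zero hq (by omega) hv1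

variable {T : Module.End F (Uspace F q m s)} {h : LieSubalgebra F (Module.End F (Uspace F q m s))}

lemma invariantUnder_Usub_one
    (hsub : (h : Set (Module.End F (Uspace F q m s))) ⊆
      ↑((F ∙ Aop F q m s) ⊔ (⨆ j : Fin m, LinearMap.range (psiMap q m s T j))))
    (hT : IsTmap q m s T) :
    InvariantUnder (h : Set (Module.End F (Uspace F q m s))) (Usub F q m s 1) :=
  invariantUnder_of_mapsTo hsub
    (mapsTo_Usub_of_apply_eq_mul (fun _ => Ideal.Quotient.mk _ X) (fun _ _ => rfl) 1)
    (mapsTo_Usub_of_apply_eq_mul (fun i => Ideal.Quotient.mk _ (X + C (i : F)))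
      (fun _ _ => rfl) 1)
    ((hT.mapsTo_Usub_succ 0).mono_right (Usub_mono (Nat.zero_le 1)))

lemma invariantUnder_Usocle
    (hsub : (h : Set (Module.End F (Uspace F q m s))) ⊆
      ↑((F ∙ Aop F q m s) ⊔ (⨆ j : Fin m, LinearMap.range (psiMap q m s T j))))
    (hT : IsTmap q m s T) :
    InvariantUnder (h : Set (Module.End F (Uspace F q m s))) (Usocle F q m s) :=
  invariantUnder_of_mapsTo hsub
    (mapsTo_Usocle_of_apply_eq_mul (fun _ => Ideal.Quotient.mk _ X) fun _ _ => rfl)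
    (mapsTo_Usocle_of_apply_eq_mul (fun i => Ideal.Quotient.mk _ (X + C (i : F)))
      fun _ _ => rfl)
    hT.mapsTo_Usocle

end Forward

/-- Let `h` be any Lie subalgebra of
`g = ⟨A⟩ ⊕ 𝓔 ⊕ T𝓔 ⊕ ⋯ ⊕ T^{m−1}𝓔 ⊆ gl(U)` containing `s = ⟨A⟩ ⊕ ⟨T⟩`.  Then `U` is a
uniserial `h`-module (the `h`-invariant subspaces of `U` form a chain) if and only if
`s₁ = s₂ = ⋯ = s_m = 1`. -/
theorem uniserial_iff_all_exponents_one
    {F : Type*} [Field F] (q : Polynomial F) (d m : ℕ) (s : Fin m → ℕ)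
    (hdata : GoodData F q d m s)
    (T : Module.End F (Uspace F q m s)) (hT : IsTmap q m s T)
    (h : LieSubalgebra F (Module.End F (Uspace F q m s)))
    (hA : Aop F q m s ∈ h) (hTmem : T ∈ h)
    (hsub : (h : Set (Module.End F (Uspace F q m s))) ⊆
      ↑((F ∙ Aop F q m s) ⊔ (⨆ j : Fin m, LinearMap.range (psiMap q m s T j)))) :
    (∀ W₁ W₂ : Submodule F (Uspace F q m s),
        InvariantUnder (h : Set (Module.End F (Uspace F q m s))) W₁ →
        InvariantUnder (h : Set (Module.End F (Uspace F q m s))) W₂ →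
        W₁ ≤ W₂ ∨ W₂ ≤ W₁) ↔
      (∀ i : Fin m, s i = 1) := by
  have hm := hdata.hm
  constructor
  · intro hchain
    by_contra! ⟨i, hi⟩
    have hs0 : 2 ≤ s ⟨0, by omega⟩ :=
      ((hdata.pos i).lt_of_ne' hi).trans_le (hdata.dec _ i (Nat.zero_le _))
    rcases hchain _ _ (invariantUnder_Usub_one hsub hT) (invariantUnder_Usocle hsub hT)
      with hle | hle
    · exact not_Usub_one_le_Usocle hdata.irr _ hs0 hle
    · exact not_Usocle_le_Usub_one hdata.irr hm (hdata.pos _) hle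
  · intro hs1 W₁ W₂ h₁ h₂
    obtain ⟨n₁, rfl⟩ := exists_eq_Usub_of_invariant hdata.irr hs1 hT
      (fun u hu => h₁ _ hA u hu) (fun u hu => h₁ _ hTmem u hu)
    obtain ⟨n₂, rfl⟩ := exists_eq_Usub_of_invariant hdata.irr hs1 hT
      (fun u hu => h₂ _ hA u hu) (fun u hu => h₂ _ hTmem u hu)
    exact (le_total n₁ n₂).imp (fun hn => Usub_mono hn) (fun hn => Usub_mono hn)
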